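/- For v ∈ W0 put Π0(v) := Φ0+ ∩ v⁻¹Φ0−, and for y ∈ E define κ_v(y) := ∏_{α ∈ Π0(v)} k(α)^{−η(α(y))} ∈ Fˣ. Let χ : Φ0 → {±1} be χ(α) = 1 for α ∈ Φ0+ and χ(α) = −1 for α ∈ Φ0−. Then for all u, v ∈ W0 and all y ∈ E: (1) κ_{uv}(y) = κ_v(y)·∏_{α ∈ v⁻¹Π0(u)} k(α)^{−χ(α)·η(χ(α)·α(y))}; (2) if α(y) ≠ 0 for all α ∈ Φ0, then κ_{uv}(y) = κ_u(v·y)·κ_v(y). -/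

import Mathlib

open scoped InnerProductSpace Classical

noncomputable section

namespace SSV

variable {E : Type*} [NormedAddCommGroup E] [InnerProductSpace ℝ E]

/-- The coroot `α∨ = (2/‖α‖²)·α` of `α ∈ E`, under the identification of `E*` with `E`
via the inner product (a root `α` acts on `E` as the linear functional `y ↦ ⟪α,y⟫`). -/
def cv (α : E) : E := (2 / ⟪α, α⟫_ℝ) • α

/-- The linear functional `y ↦ ⟪α∨, y⟫ = 2⟪α,y⟫/‖α‖²`. -/
def rootForm (α : E) : E →ₗ[ℝ] ℝ where
  toFun y := 2 / ⟪α, α⟫_ℝ * ⟪α, y⟫_ℝ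
  map_add' y z := by rw [inner_add_right]; ring
  map_smul' c y := by
    simp only [RingHom.id_apply, smul_eq_mul, real_inner_smul_right]
    ring

/-- The orthogonal reflection `s_α : y ↦ y − α(y)·α∨` in the hyperplane `α = 0`. -/
def lrefl (α : E) : E ≃ₗ[ℝ] E :=
  if h : ⟪α, α⟫_ℝ = 0 then LinearEquiv.refl ℝ E
  else
    Module.reflection (f := rootForm α) (x := α)
      (by simp only [rootForm, LinearMap.coe_mk, AddHom.coe_mk]; field_simp)

/-- The affine reflection `s_a : y ↦ y − a(y)·α∨` associated to the affine root
`a = (α, c)`, i.e. to the affine function `y ↦ α(y) + c = ⟪α,y⟫ + c` on `E`. -/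
def aRefl (α : E) (c : ℝ) : E ≃ᵃ[ℝ] E :=
  (lrefl α).toAffineEquiv.trans (AffineEquiv.constVAdd ℝ E (-(c • cv α)))

/-- The translation `τ(μ) : y ↦ y + μ`. -/
def tr (μ : E) : E ≃ᵃ[ℝ] E := AffineEquiv.constVAdd ℝ E μ

/-- `η = χ_{ℤ_{>0}} − χ_{ℤ_{≤0}} : ℝ → {−1,0,1}`. -/
def eta (x : ℝ) : ℤ :=
  if ∃ n : ℤ, x = (n : ℝ) then (if 0 < x then 1 else -1) else 0

/-- `sgn(ℓ) = ℓ/|ℓ|` for `ℓ ≠ 0`, and `sgn(0) = 1`. -/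
def sgnz (l : ℤ) : ℤ := if 0 ≤ l then 1 else -1

/-- The alternating word `j j' j j' ⋯` of length `m`. -/
def altList {n : ℕ} (j j' : Fin n) (m : ℕ) : List (Fin n) :=
  (List.range m).map fun s => if s % 2 = 0 then j else j'

/-- Evaluation of the affine function `a = (α, c)` at `y`: `a(y) = α(y) + c`. -/
def aval (a : E × ℝ) (y : E) : ℝ := ⟪a.1, y⟫_ℝ + a.2

/-- The contragredient action of `w` on affine roots: `(w·a)(y) = a(w⁻¹·y)`. -/
def wact (w : E ≃ᵃ[ℝ] E) (a : E × ℝ) : E × ℝ :=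
  (w.linear a.1, a.2 - ⟪w.linear a.1, w 0⟫_ℝ)

/-- The relation `y ≺_α z`. -/
def precA (α : E) (y z : E) : Prop :=
  (∃ l : ℤ, y = aRefl α (l : ℝ) z) ∧
    (|⟪α, y⟫_ℝ| < |⟪α, z⟫_ℝ| ∨ (⟪α, y⟫_ℝ = -⟪α, z⟫_ℝ ∧ 0 < ⟪α, y⟫_ℝ))

/-- The data of a reduced irreducible finite root system `Φ0` realised in `E* ≅ E`,
normalised so that long roots have squared length `2/m²`, together with a choice of
positive roots, simple roots `α_1, …, α_r`, and the corresponding highest root `φ`. -/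
structure Data (E : Type*) [NormedAddCommGroup E] [InnerProductSpace ℝ E] where
  r : ℕ
  r_pos : 0 < r
  m : ℕ
  m_pos : 0 < m
  Φ0 : Finset E
  pos : Finset E
  simple : Fin r → E
  hroot : E
  root_ne_zero : ∀ α ∈ Φ0, α ≠ 0
  root_neg_mem : ∀ α ∈ Φ0, -α ∈ Φ0
  root_reduced : ∀ α ∈ Φ0, ∀ c : ℝ, c • α ∈ Φ0 → c = 1 ∨ c = -1
  root_refl_mem : ∀ α ∈ Φ0, ∀ β ∈ Φ0, aRefl α 0 β ∈ Φ0
  root_crystal : ∀ α ∈ Φ0, ∀ β ∈ Φ0, ∃ n : ℤ, ⟪cv β, α⟫_ℝ = (n : ℝ)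
  root_irred : ∀ A B : Set E, (Φ0 : Set E) = A ∪ B → A.Nonempty → B.Nonempty →
    (∀ a ∈ A, ∀ b ∈ B, ⟪a, b⟫_ℝ = 0) → False
  root_norm_le : ∀ α ∈ Φ0, ⟪α, α⟫_ℝ ≤ 2 / (m : ℝ) ^ 2
  root_norm_int : ∀ α ∈ Φ0, ∃ n : ℤ, (n : ℝ) * ⟪α, α⟫_ℝ = 2
  pos_subset : pos ⊆ Φ0
  pos_dichotomy : ∀ α ∈ Φ0, (α ∈ pos ∧ -α ∉ pos) ∨ (α ∉ pos ∧ -α ∈ pos)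
  simple_mem_pos : ∀ i, simple i ∈ pos
  simple_indep : LinearIndependent ℝ simple
  pos_nat_comb : ∀ α ∈ pos, ∃ n : Fin r → ℕ, α = ∑ i, (n i : ℝ) • simple i
  hroot_mem_pos : hroot ∈ pos
  hroot_long : ⟪hroot, hroot⟫_ℝ = 2 / (m : ℝ) ^ 2
  hroot_highest : ∀ α ∈ Φ0, ∃ n : Fin r → ℕ, hroot - α = ∑ i, (n i : ℝ) • simple i

namespace Data

variable (D : Data E)

/-- The coroot lattice `Q∨`. -/
def Qv : AddSubgroup E := AddSubgroup.closure (cv '' (D.Φ0 : Set E))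

/-- The simple affine roots `α_0 = (−φ, 1)` and `α_i = (α_i, 0)` (`1 ≤ i ≤ r`), as pairs
`(gradient, constant term)`. -/
def asimple : Fin (D.r + 1) → E × ℝ :=
  Fin.cases (-D.hroot, (1 : ℝ)) fun i => (D.simple i, (0 : ℝ))

/-- The simple reflections `s_0, …, s_r` of the affine Weyl group. -/
def sgen (j : Fin (D.r + 1)) : E ≃ᵃ[ℝ] E := aRefl (D.asimple j).1 (D.asimple j).2

/-- `a = (α, c)` is an affine root iff `α ∈ Φ0` and `c ∈ ℤ`. -/
def IsAffRoot (a : E × ℝ) : Prop := a.1 ∈ D.Φ0 ∧ ∃ n : ℤ, a.2 = (n : ℝ)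

/-- `a` is a positive affine root. -/
def IsPosAff (a : E × ℝ) : Prop :=
  D.IsAffRoot a ∧ (0 < a.2 ∨ (a.2 = 0 ∧ a.1 ∈ D.pos))

/-- The set of reflections `s_α`, `α ∈ Φ0`. -/
def reflSet : Set (E ≃ᵃ[ℝ] E) := {g | ∃ α ∈ D.Φ0, g = aRefl α 0}

/-- The set of translations `τ(μ)`, `μ ∈ Q∨`. -/
def trSet : Set (E ≃ᵃ[ℝ] E) := {g | ∃ μ ∈ D.Qv, g = tr μ}

/-- The finite Weyl group `W0`, generated by the reflections `s_α`. -/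
def W0 : Subgroup (E ≃ᵃ[ℝ] E) := Subgroup.closure D.reflSet

/-- The affine Weyl group `W = W0 ⋉ Q∨`. -/
def W : Subgroup (E ≃ᵃ[ℝ] E) := Subgroup.closure (D.reflSet ∪ D.trSet)

/-- The inversion set `Π(w) = Φ+ ∩ w⁻¹Φ−`. -/
def PiSet (w : E ≃ᵃ[ℝ] E) : Set (E × ℝ) :=
  {a | D.IsPosAff a ∧ ¬D.IsPosAff (wact w a)}

/-- The length function `ℓ(w) := #Π(w)`. -/
def len (w : E ≃ᵃ[ℝ] E) : ℕ := (D.PiSet w).ncard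

/-- The open fundamental alcove `C₊`. -/
def Cp : Set E := {y | ∀ α ∈ D.pos, 0 < ⟪α, y⟫_ℝ ∧ ⟪α, y⟫_ℝ < 1}

/-- The closed fundamental alcove `C̄₊`. -/
def Cbar : Set E := closure D.Cp

/-- The face `C^J` of `C̄₊` (for `J ⊊ {0,…,r}`). -/
def CJ (J : Set (Fin (D.r + 1))) : Set E :=
  {c | c ∈ D.Cbar ∧ ∀ j, aval (D.asimple j) c = 0 ↔ j ∈ J}

/-- The orbit `O_c = W·c`. -/
def Orb (c : E) : Set E := {y | ∃ w ∈ D.W, w c = y}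

/-- The unique point `c_y ∈ C̄₊` in the `W`-orbit of `y`. -/
def cpt (y : E) : E :=
  if h : ∃ c, c ∈ D.Cbar ∧ ∃ w ∈ D.W, w c = y then h.choose else 0

/-- The unique shortest element `w_y ∈ W` with `w_y · c_y = y`. -/
def wmin (y : E) : E ≃ᵃ[ℝ] E :=
  if h : ∃ w, (w ∈ D.W ∧ w (D.cpt y) = y) ∧
      ∀ u, u ∈ D.W → u (D.cpt y) = y → D.len w ≤ D.len u then
    h.choose
  else 1

/-- Reflections of the Coxeter system `(W, {s_0, …, s_r})`. -/
def IsCoxRefl (g : E ≃ᵃ[ℝ] E) : Prop := ∃ w ∈ D.W, ∃ j, g = w * D.sgen j * w⁻¹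

/-- A single step in the Bruhat order. -/
def bstep (u v : E ≃ᵃ[ℝ] E) : Prop :=
  (∃ g, D.IsCoxRefl g ∧ v = g * u) ∧ D.len u < D.len v

/-- The Bruhat order `≤_B` of `(W, {s_0, …, s_r})`. -/
def bruhatLE : (E ≃ᵃ[ℝ] E) → (E ≃ᵃ[ℝ] E) → Prop := Relation.ReflTransGen D.bstep

/-- The strict Bruhat order `<_B`. -/
def bruhatLT (u v : E ≃ᵃ[ℝ] E) : Prop := D.bruhatLE u v ∧ u ≠ v

/-- The parabolic Bruhat order `≤` on `E`: `y ≤ z` iff `y ∈ W·z` and `w_y ≤_B w_z`. -/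
def paraLE (y z : E) : Prop :=
  (∃ w ∈ D.W, w z = y) ∧ D.bruhatLE (D.wmin y) (D.wmin z)

/-- The strict parabolic Bruhat order `<` on `E`. -/
def paraLT (y z : E) : Prop := D.paraLE y z ∧ y ≠ z

/-- The relation `≺`, the transitive closure of the `≺_α` (`α ∈ Φ0+`). -/
def prec : E → E → Prop :=
  Relation.TransGen fun y z => ∃ α ∈ D.pos, precA α y z

/-- The relation `⪯`. -/
def precLE (y z : E) : Prop := D.prec y z ∨ y = z

/-- The parabolic subgroup `W_J` of `W`. -/
def WJ (J : Set (Fin (D.r + 1))) : Subgroup (E ≃ᵃ[ℝ] E) :=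
  Subgroup.closure {g | ∃ j ∈ J, g = D.sgen j}

/-- The set `W^J` of minimal-length representatives of the cosets `W/W_J`. -/
def WminJ (J : Set (Fin (D.r + 1))) : Set (E ≃ᵃ[ℝ] E) :=
  {w | w ∈ D.W ∧ ∀ u ∈ D.WJ J, D.len w ≤ D.len (w * u)}

/-- Dominant elements: `α(μ) ≥ 0` for all `α ∈ Φ0+`. -/
def IsDom (μ : E) : Prop := ∀ α ∈ D.pos, 0 ≤ ⟪α, μ⟫_ℝ

/-- `Π0(v) = Φ0+ ∩ v⁻¹Φ0−` for `v ∈ W0`. -/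
def Pi0 (v : E ≃ᵃ[ℝ] E) : Finset E := D.pos.filter fun α => -(v.linear α) ∈ D.pos

/-- `χ = χ₊ − χ₋ : Φ0 → {±1}`. -/
def chi (α : E) : ℤ := if α ∈ D.pos then 1 else -1

end Data

/-- The character `𝔰_y : μ ↦ ∏_{α ∈ Φ0+} k_α^{η(α(y))·α(μ)}` (evaluated at points `μ` where
all `α(μ)` are integers, e.g. on a lattice `Λ ∈ 𝓛`). -/
def sweight {F : Type*} [Field F] (D : Data E) (k : E → Fˣ) (y μ : E) : Fˣ :=
  ∏ α ∈ D.pos, k α ^ (eta ⟪α, y⟫_ℝ * ⌊⟪α, μ⟫_ℝ⌋)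

/-- The action of `w ∈ W` on characters of `Q∨`: for `w = τ(ν)v`,
`(w·t)(μ) = q^{⟪ν,μ⟫}·t(v⁻¹μ)`. -/
def charAct {F : Type*} [Field F] (q : Fˣ) (w : E ≃ᵃ[ℝ] E) (t : E → Fˣ) : E → Fˣ :=
  fun μ => q ^ ⌊⟪w 0, μ⟫_ℝ⌋ * t (w.linear.symm μ)

/-- `t` defines a multiplicative character of `Q∨`, i.e. an element of `T = Hom(Q∨, Fˣ)`. -/
def IsChar {F : Type*} [Field F] (D : Data E) (t : E → Fˣ) : Prop :=
  ∀ μ ∈ D.Qv, ∀ ν ∈ D.Qv, t (μ + ν) = t μ * t ν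

/-- `q_α := q^{2/‖α‖²}`. -/
def qroot {F : Type*} [Field F] (q : Fˣ) (α : E) : Fˣ := q ^ ⌊2 / ⟪α, α⟫_ℝ⌋

/-- Membership in `T_J`: `t ∈ T` with `t^{α_i∨} = 1` for `i ∈ J ∩ {1,…,r}`, and
`q_φ·t^{−φ∨} = 1` if `0 ∈ J`. -/
def InTJ {F : Type*} [Field F] (D : Data E) (q : Fˣ) (J : Set (Fin (D.r + 1)))
    (t : E → Fˣ) : Prop :=
  IsChar D t ∧ (∀ i : Fin D.r, i.succ ∈ J → t (cv (D.simple i)) = 1) ∧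
    ((0 : Fin (D.r + 1)) ∈ J → qroot q D.hroot * t (-cv D.hroot) = 1)

/-- `κ_v(y) = ∏_{α ∈ Π0(v)} k_α^{−η(α(y))}`. -/
def kappa {F : Type*} [Field F] (D : Data E) (k : E → Fˣ) (v : E ≃ᵃ[ℝ] E) (y : E) : Fˣ :=
  ∏ α ∈ D.Pi0 v, k α ^ (-eta ⟪α, y⟫_ℝ)

/-- The (quasi-)monomial `x^y`, as an element of `⊕_{z ∈ E} F x^z`. -/
def xmono (F : Type*) [Field F] (y : E) : E →₀ F := Finsupp.single y 1

/-- The multiplication operator `π(x^μ) : x^y ↦ x^{y+μ}`. -/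
def xop (F : Type*) [Field F] (μ : E) : Module.End F (E →₀ F) :=
  Finsupp.lmapDomain F F (· + μ)

/-- The truncated divided difference `∇_i(x^y)` in its explicit form: with `n = ⌊α(y)⌋`,
`−(x^{y−α∨} + ⋯ + x^{y−nα∨})` if `n ≥ 1`, `0` if `n = 0`, and
`x^y + x^{y+α∨} + ⋯ + x^{y+(−n−1)α∨}` if `n ≤ −1`. -/
def nablaS (F : Type*) [Field F] (α y : E) : E →₀ F :=
  if 1 ≤ ⌊⟪α, y⟫_ℝ⌋ then
    -∑ s ∈ Finset.Icc (1 : ℤ) ⌊⟪α, y⟫_ℝ⌋, Finsupp.single (y - (s : ℝ) • cv α) (1 : F)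
  else
    ∑ s ∈ Finset.Icc (0 : ℤ) (-⌊⟪α, y⟫_ℝ⌋ - 1), Finsupp.single (y + (s : ℝ) • cv α) (1 : F)

/-- The truncated divided difference `∇_0(x^y)` in its explicit form: with `n = ⌊−φ(y)⌋`,
`−(q_φ^{−1}x^{y+φ∨} + ⋯ + q_φ^{−n}x^{y+nφ∨})` if `n ≥ 1`, `0` if `n = 0`, and
`x^y + q_φ x^{y−φ∨} + ⋯ + q_φ^{−n−1}x^{y+(n+1)φ∨}` if `n ≤ −1`. -/
def nabla0 {F : Type*} [Field F] (D : Data E) (q : Fˣ) (y : E) : E →₀ F :=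
  if 1 ≤ ⌊-⟪D.hroot, y⟫_ℝ⌋ then
    -∑ s ∈ Finset.Icc (1 : ℤ) ⌊-⟪D.hroot, y⟫_ℝ⌋,
      (((qroot q D.hroot : Fˣ) : F) ^ (-s)) • Finsupp.single (y + (s : ℝ) • cv D.hroot) (1 : F)
  else
    ∑ s ∈ Finset.Icc (0 : ℤ) (-⌊-⟪D.hroot, y⟫_ℝ⌋ - 1),
      (((qroot q D.hroot : Fˣ) : F) ^ s) • Finsupp.single (y - (s : ℝ) • cv D.hroot) (1 : F)

/-- `k_j := k_{α_j}` (`0 ≤ j ≤ r`), with `k_0 = k_φ`. -/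
def kgen {F : Type*} [Field F] (D : Data E) (k : E → Fˣ) : Fin (D.r + 1) → Fˣ :=
  Fin.cases (k D.hroot) fun i => k (D.simple i)

/-- The image of the monomial `x^y` under the truncated Demazure–Lusztig operator `π(T_j)`:
`π(T_i)x^y = k_i^{χ_ℤ(α_i(y))}x^{s_i y} + (k_i − k_i^{−1})∇_i(x^y)` for `1 ≤ i ≤ r`, and
`π(T_0)x^y = k_0^{χ_ℤ(α_0(y))}𝔱_y^{φ∨}x^{s_φ y} + (k_0 − k_0^{−1})∇_0(x^y)`. -/
def Tfun {F : Type*} [Field F] (D : Data E) (q : Fˣ) (k t : E → Fˣ) :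
    Fin (D.r + 1) → E → E →₀ F :=
  Fin.cases
    (fun y =>
      ((if ∃ n : ℤ, aval (D.asimple 0) y = (n : ℝ) then ((k D.hroot : Fˣ) : F) else 1) *
          ((charAct q (D.wmin y) t (cv D.hroot) : Fˣ) : F)) •
          Finsupp.single (aRefl D.hroot 0 y) (1 : F) +
        (((k D.hroot : Fˣ) : F) - (((k D.hroot)⁻¹ : Fˣ) : F)) • nabla0 D q y)
    fun i y =>
      (if ∃ n : ℤ, ⟪D.simple i, y⟫_ℝ = (n : ℝ) then ((k (D.simple i) : Fˣ) : F) else 1) •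
          Finsupp.single (aRefl (D.simple i) 0 y) (1 : F) +
        (((k (D.simple i) : Fˣ) : F) - (((k (D.simple i))⁻¹ : Fˣ) : F)) • nablaS F (D.simple i) y

/-- The truncated Demazure–Lusztig operator `π(T_j)` on `⊕_{y ∈ E} F x^y`. -/
def Top {F : Type*} [Field F] (D : Data E) (q : Fˣ) (k t : E → Fˣ) (j : Fin (D.r + 1)) :
    Module.End F (E →₀ F) :=
  Finsupp.linearCombination F (Tfun D q k t j)

/-- `π(((1 − x^{−α(μ)α∨})/(1 − x^{α∨}))·x^μ)` applied to `x^y`: the finite geometric sum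
appearing in the cross relation for `T_i`. -/
def crossS (F : Type*) [Field F] (α μ y : E) : E →₀ F :=
  if 1 ≤ ⌊⟪α, μ⟫_ℝ⌋ then
    -∑ s ∈ Finset.Icc (1 : ℤ) ⌊⟪α, μ⟫_ℝ⌋, Finsupp.single (y + μ - (s : ℝ) • cv α) (1 : F)
  else
    ∑ s ∈ Finset.Icc (0 : ℤ) (-⌊⟪α, μ⟫_ℝ⌋ - 1), Finsupp.single (y + μ + (s : ℝ) • cv α) (1 : F)

/-- `π(((1 − (q_φ x^{−φ∨})^{φ(μ)})/(1 − q_φ x^{−φ∨}))·x^μ)` applied to `x^y`: the finite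
geometric sum appearing in the cross relation for `T_0`. -/
def cross0 {F : Type*} [Field F] (D : Data E) (q : Fˣ) (μ y : E) : E →₀ F :=
  if 0 ≤ ⌊⟪D.hroot, μ⟫_ℝ⌋ then
    ∑ s ∈ Finset.Icc (0 : ℤ) (⌊⟪D.hroot, μ⟫_ℝ⌋ - 1),
      (((qroot q D.hroot : Fˣ) : F) ^ s) • Finsupp.single (y + μ - (s : ℝ) • cv D.hroot) (1 : F)
  else
    -∑ s ∈ Finset.Icc (1 : ℤ) (-⌊⟪D.hroot, μ⟫_ℝ⌋),
      (((qroot q D.hroot : Fˣ) : F) ^ (-s)) • Finsupp.single (y + μ + (s : ℝ) • cv D.hroot) (1 : F)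

/-- The quasi-monomial `x^y` in the model `Q^{(c)} ⊆ (E → Q)` of `Q ⊗_P P^{(c)}`:
`x^y` is the function `z ↦ x^{y−z}` supported on `y + Q∨`. -/
def xiQ {Q : Type*} [Field Q] (D : Data E) (mono : E → Q) (y : E) : E → Q :=
  fun z => if z - y ∈ D.Qv then mono (y - z) else 0

/-- Membership in the model `Q^{(c)} ⊆ (E → Q)` of `Q ⊗_P P^{(c)}`: functions supported on
`O_c` satisfying the covariance `ξ(z + ν) = x^{−ν}·ξ(z)` (`ν ∈ Q∨`). -/
def IsQc {Q : Type*} [Field Q] (D : Data E) (mono : E → Q) (c : E) (ξ : E → Q) : Prop :=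
  (∀ z, z ∉ D.Orb c → ξ z = 0) ∧
    ∀ z ∈ D.Orb c, ∀ ν ∈ D.Qv, ξ (z + ν) = (mono ν)⁻¹ * ξ z

/-- `x^{α_0∨} = q_φ x^{−φ∨}` as an element of `Q`. -/
def xroot0 {F Q : Type*} [Field F] [Field Q] (D : Data E) (ι : F →+* Q) (q : Fˣ)
    (mono : E → Q) : Q :=
  ι ((qroot q D.hroot : Fˣ) : F) * mono (-cv D.hroot)

/-- The right-hand side of the defining formula for `σ(s_j)(x^y)`:
`(k_j^{χ_ℤ(α_j(y))}(x^{α_j∨} − 1)/(k_j x^{α_j∨} − k_j^{−1}))·s_{j,𝔱}x^y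
 + ((k_j − k_j^{−1})/(k_j x^{α_j∨} − k_j^{−1}))·x^{y − ⌊Dα_j(y)⌋α_j∨}`. -/
def sigmaFormula {F Q : Type*} [Field F] [Field Q] (D : Data E) (ι : F →+* Q) (q : Fˣ)
    (k t : E → Fˣ) (mono : E → Q) : Fin (D.r + 1) → E → E → Q :=
  Fin.cases
    (fun y =>
      (((if ∃ n : ℤ, aval (D.asimple 0) y = (n : ℝ) then ι ((k D.hroot : Fˣ) : F) else 1) *
            (xroot0 D ι q mono - 1)) /
          (ι ((k D.hroot : Fˣ) : F) * xroot0 D ι q mono - ι (((k D.hroot)⁻¹ : Fˣ) : F))) •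
          (ι ((charAct q (D.wmin y) t (cv D.hroot) : Fˣ) : F) •
            xiQ D mono (aRefl D.hroot 0 y)) +
        ((ι ((k D.hroot : Fˣ) : F) - ι (((k D.hroot)⁻¹ : Fˣ) : F)) /
          (ι ((k D.hroot : Fˣ) : F) * xroot0 D ι q mono - ι (((k D.hroot)⁻¹ : Fˣ) : F))) •
          (ι (((qroot q D.hroot ^ (-⌊-⟪D.hroot, y⟫_ℝ⌋) : Fˣ) : F)) •
            xiQ D mono (y + (⌊-⟪D.hroot, y⟫_ℝ⌋ : ℝ) • cv D.hroot)))
    fun i y =>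
      (((if ∃ n : ℤ, ⟪D.simple i, y⟫_ℝ = (n : ℝ) then ι ((k (D.simple i) : Fˣ) : F) else 1) *
            (mono (cv (D.simple i)) - 1)) /
          (ι ((k (D.simple i) : Fˣ) : F) * mono (cv (D.simple i)) -
            ι (((k (D.simple i))⁻¹ : Fˣ) : F))) •
          xiQ D mono (aRefl (D.simple i) 0 y) +
        ((ι ((k (D.simple i) : Fˣ) : F) - ι (((k (D.simple i))⁻¹ : Fˣ) : F)) /
          (ι ((k (D.simple i) : Fˣ) : F) * mono (cv (D.simple i)) -
            ι (((k (D.simple i))⁻¹ : Fˣ) : F))) •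
          xiQ D mono (y - (⌊⟪D.simple i, y⟫_ℝ⌋ : ℝ) • cv (D.simple i))

end SSV

/-! Every element of `W0` fixes `0` and has an orthogonal linear part permuting `Φ0`. For two
such maps `u, v`, the set `v⁻¹Π0(u)` consists of the positive roots of `Π0(uv) ∖ Π0(v)` and the
negatives of the roots of `Π0(v) ∖ Π0(uv)`. The factor `k(α)^{−χ(α)η(χ(α)α(y))}` equals
`k(α)^{−η(α(y))}` on positive roots and is inverted by `α ↦ −α` (as `k(−α) = k(α)`), which gives
(1). If no root vanishes at `y`, then `η(−x) = −η(x)` makes the factor `k(α)^{−η(α(y))}` for every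
root, and `W0`-invariance of `k` and of `⟪·,·⟫` turns the product over `v⁻¹Π0(u)` into
`κ_u(v·y)`. -/

namespace SSV

variable {E : Type*} [NormedAddCommGroup E] [InnerProductSpace ℝ E]

lemma eta_neg {x : ℝ} (hx : x ≠ 0) : eta (-x) = -eta x := by
  have hint : (∃ n : ℤ, -x = n) ↔ ∃ n : ℤ, x = n :=
    ⟨fun ⟨n, hn⟩ => ⟨-n, by push_cast; linarith⟩, fun ⟨n, hn⟩ => ⟨-n, by push_cast; linarith⟩⟩
  unfold eta
  rw [if_congr hint rfl rfl]
  split_ifs <;> first | rfl | (exfalso; apply hx; linarith)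

lemma lrefl_apply {α : E} (h : ⟪α, α⟫_ℝ ≠ 0) (x : E) :
    lrefl α x = x - (2 / ⟪α, α⟫_ℝ * ⟪α, x⟫_ℝ) • α := by
  rw [lrefl, dif_neg h, Module.reflection_apply]
  rfl

lemma lrefl_self {α : E} (h : ⟪α, α⟫_ℝ ≠ 0) : lrefl α α = -α := by
  rw [lrefl, dif_neg h, Module.reflection_apply_self]

lemma lrefl_lrefl (α x : E) : lrefl α (lrefl α x) = x := by
  unfold lrefl
  split_ifs
  · rfl
  · exact Module.involutive_reflection _ x

lemma inner_lrefl_lrefl (α x z : E) : ⟪lrefl α x, lrefl α z⟫_ℝ = ⟪x, z⟫_ℝ := by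
  by_cases h : ⟪α, α⟫_ℝ = 0
  · rw [lrefl, dif_pos h]
    rfl
  · rw [lrefl_apply h, lrefl_apply h]
    simp only [inner_sub_left, inner_sub_right, real_inner_smul_left, real_inner_smul_right,
      real_inner_comm x α, real_inner_comm z α]
    field_simp
    ring

lemma mem_image_symm_iff {e : E ≃ₗ[ℝ] E} {s : Finset E} {β : E} :
    β ∈ s.image e.symm ↔ e β ∈ s := by
  rw [Finset.mem_image]
  exact ⟨by rintro ⟨γ, hγ, rfl⟩; simpa, fun h => ⟨_, h, e.symm_apply_apply β⟩⟩

lemma apply_eq_linear_of_map_zero {w : E ≃ᵃ[ℝ] E} (h0 : w 0 = 0) (y : E) :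
    w y = w.linear y := by
  simpa [h0] using w.map_vadd 0 y

lemma aRefl_zero_apply (α x : E) : aRefl α 0 x = lrefl α x := by
  simp [aRefl]

lemma aRefl_zero_linear (α : E) : (aRefl α 0).linear = lrefl α := by
  ext x
  rfl

namespace Data

variable (D : Data E)

lemma neg_mem_pos_iff {α : E} (hα : α ∈ D.Φ0) : -α ∈ D.pos ↔ α ∉ D.pos := by
  rcases D.pos_dichotomy α hα with h | h <;> simp [h]

def rootIsometries : Subgroup (E ≃ᵃ[ℝ] E) where
  carrier := {w | w 0 = 0 ∧ (∀ x z, ⟪w.linear x, w.linear z⟫_ℝ = ⟪x, z⟫_ℝ) ∧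
    ∀ α, w.linear α ∈ D.Φ0 ↔ α ∈ D.Φ0}
  one_mem' := ⟨rfl, fun _ _ => rfl, fun _ => Iff.rfl⟩
  mul_mem' := by
    rintro a b ⟨ha0, haI, haR⟩ ⟨hb0, hbI, hbR⟩
    refine ⟨?_, fun x z => ?_, fun α => ?_⟩
    · change a (b 0) = 0
      rw [hb0, ha0]
    · change ⟪a.linear (b.linear x), a.linear (b.linear z)⟫_ℝ = _
      rw [haI, hbI]
    · change a.linear (b.linear α) ∈ D.Φ0 ↔ _
      rw [haR, hbR]
  inv_mem' := by
    rintro a ⟨ha0, haI, haR⟩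
    have hlin : (a⁻¹).linear = a.linear.symm := by
      rw [AffineEquiv.inv_def, AffineEquiv.linear_symm]
    refine ⟨?_, fun x z => ?_, fun α => ?_⟩
    · rw [AffineEquiv.inv_def, AffineEquiv.symm_apply_eq, ha0]
    · rw [hlin, ← haI, a.linear.apply_symm_apply, a.linear.apply_symm_apply]
    · rw [hlin, ← haR, a.linear.apply_symm_apply]

lemma W0_le_rootIsometries : D.W0 ≤ D.rootIsometries := by
  refine Subgroup.closure_le _ |>.mpr ?_
  rintro _ ⟨α, hα, rfl⟩
  refine ⟨by rw [aRefl_zero_apply, map_zero], fun x z => ?_, fun β => ?_⟩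
  · rw [aRefl_zero_linear, inner_lrefl_lrefl]
  · rw [aRefl_zero_linear, ← aRefl_zero_apply]
    refine ⟨fun h => ?_, D.root_refl_mem α hα β⟩
    have := D.root_refl_mem α hα _ h
    rwa [aRefl_zero_apply, aRefl_zero_apply, lrefl_lrefl] at this

section InversionSets

variable {D} {u v : E ≃ᵃ[ℝ] E}

lemma filter_pos_image_Pi0 (hv : v ∈ D.rootIsometries) :
    ((D.Pi0 u).image v.linear.symm).filter (· ∈ D.pos) = D.Pi0 (u * v) \ D.Pi0 v := by
  ext β
  have hneg : β ∈ D.pos → (-(v.linear β) ∈ D.pos ↔ v.linear β ∉ D.pos) := fun hβ =>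
    D.neg_mem_pos_iff <| (hv.2.2 β).mpr (D.pos_subset hβ)
  simp only [Finset.mem_filter, mem_image_symm_iff, Finset.mem_sdiff, Pi0]
  change _ ↔ (β ∈ D.pos ∧ -(u.linear (v.linear β)) ∈ D.pos) ∧ _
  tauto

lemma filter_not_pos_image_Pi0 (hu : u ∈ D.rootIsometries) (hv : v ∈ D.rootIsometries) :
    ((D.Pi0 u).image v.linear.symm).filter (· ∉ D.pos) =
      (D.Pi0 v \ D.Pi0 (u * v)).image Neg.neg := by
  ext β
  rw [← neg_neg β, neg_injective.mem_finset_image]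
  simp only [Finset.mem_filter, mem_image_symm_iff, Finset.mem_sdiff, Pi0, map_neg, neg_neg]
  change _ ↔ _ ∧ ¬(_ ∧ u.linear (v.linear β) ∈ D.pos)
  have hvΦ : v.linear β ∈ D.pos → v.linear β ∈ D.Φ0 := fun h => D.pos_subset h
  have hβ := fun h => D.neg_mem_pos_iff ((hv.2.2 β).mp (hvΦ h))
  have huvβ := fun h => D.neg_mem_pos_iff ((hu.2.2 _).mpr (hvΦ h))
  tauto

lemma prod_image_Pi0 {G : Type*} [CommGroup G] {f : E → G}
    (hf : ∀ α ∈ D.pos, f (-α) = (f α)⁻¹) (hu : u ∈ D.rootIsometries)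
    (hv : v ∈ D.rootIsometries) :
    ∏ α ∈ (D.Pi0 u).image v.linear.symm, f α = (∏ α ∈ D.Pi0 (u * v), f α) / ∏ α ∈ D.Pi0 v, f α := by
  rw [← Finset.prod_filter_mul_prod_filter_not _ (· ∈ D.pos), filter_pos_image_Pi0 hv,
    filter_not_pos_image_Pi0 hu hv, Finset.prod_image neg_injective.injOn,
    ← Finset.prod_sdiff_div_prod_sdiff, div_eq_mul_inv, ← Finset.prod_inv_distrib]
  congr 1
  refine Finset.prod_congr rfl fun α hα => hf α ?_
  exact Finset.mem_of_mem_filter _ (Finset.mem_sdiff.mp hα).1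

end InversionSets

lemma inner_apply_eq {w : E ≃ᵃ[ℝ] E} (hw : w ∈ D.rootIsometries) (β y : E) :
    ⟪β, w y⟫_ℝ = ⟪w.linear.symm β, y⟫_ℝ := by
  rw [apply_eq_linear_of_map_zero hw.1, ← hw.2.1 (w.linear.symm β), w.linear.apply_symm_apply]

lemma k_neg {M : Type*} {k : E → M}
    (hk : ∀ α ∈ D.Φ0, ∀ w ∈ D.W0, k (w.linear α) = k α) {α : E} (hα : α ∈ D.Φ0) :
    k (-α) = k α := by
  have hαα : ⟪α, α⟫_ℝ ≠ 0 := inner_self_ne_zero.mpr (D.root_ne_zero α hα)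
  simpa [aRefl_zero_linear, lrefl_self hαα] using
    hk α hα (aRefl α 0) (Subgroup.subset_closure ⟨α, hα, rfl⟩)

end Data

variable {F : Type*} [Field F] (D : Data E) (k : E → Fˣ) (y : E)

def kappaFactor (α : E) : Fˣ := k α ^ (-(D.chi α) * eta ((D.chi α : ℝ) * ⟪α, y⟫_ℝ))

lemma kappaFactor_of_mem_pos {α : E} (hα : α ∈ D.pos) :
    kappaFactor D k y α = k α ^ (-eta ⟪α, y⟫_ℝ) := by
  simp [kappaFactor, Data.chi, hα]

lemma kappaFactor_of_inner_ne_zero {α : E} (hα : ⟪α, y⟫_ℝ ≠ 0) :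
    kappaFactor D k y α = k α ^ (-eta ⟪α, y⟫_ℝ) := by
  unfold kappaFactor Data.chi
  split_ifs <;> simp [eta_neg hα]

lemma kappaFactor_neg {α : E} (hk : k (-α) = k α) (hα : α ∈ D.pos) :
    kappaFactor D k y (-α) = (kappaFactor D k y α)⁻¹ := by
  have hnα : -α ∉ D.pos := (D.neg_mem_pos_iff (D.pos_subset hα)).not_left.mpr hα
  simp [kappaFactor, Data.chi, hα, hnα, hk]

lemma kappa_eq_prod_kappaFactor (w : E ≃ᵃ[ℝ] E) :
    kappa D k w y = ∏ α ∈ D.Pi0 w, kappaFactor D k y α :=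
  Finset.prod_congr rfl fun _ hα => (kappaFactor_of_mem_pos D k y (Finset.mem_filter.mp hα).1).symm

lemma prod_image_Pi0_kappaFactor (hk : ∀ α ∈ D.Φ0, ∀ w ∈ D.W0, k (w.linear α) = k α)
    (u : E ≃ᵃ[ℝ] E) {v : E ≃ᵃ[ℝ] E} (hv : v ∈ D.W0) (hy : ∀ α ∈ D.Φ0, ⟪α, y⟫_ℝ ≠ 0) :
    ∏ α ∈ (D.Pi0 u).image v.linear.symm, kappaFactor D k y α = kappa D k u (v y) := by
  have hv' := D.W0_le_rootIsometries hv
  rw [kappa, Finset.prod_image v.linear.symm.injective.injOn]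
  refine Finset.prod_congr rfl fun β hβ => ?_
  have hβΦ : v.linear.symm β ∈ D.Φ0 := by
    rw [← hv'.2.2, v.linear.apply_symm_apply]
    exact D.pos_subset (Finset.mem_filter.mp hβ).1
  have hkβ := hk _ hβΦ v hv
  rw [v.linear.apply_symm_apply] at hkβ
  rw [kappaFactor_of_inner_ne_zero D k y (hy _ hβΦ), D.inner_apply_eq hv', hkβ]

end SSV

theorem statement19_general
    {E : Type*} [NormedAddCommGroup E] [InnerProductSpace ℝ E]
    (D : SSV.Data E) {F : Type*} [Field F] (k : E → Fˣ)
    (hk : ∀ α ∈ D.Φ0, ∀ w ∈ D.W0, k (w.linear α) = k α)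
    (u v : E ≃ᵃ[ℝ] E) (hu : u ∈ D.W0) (hv : v ∈ D.W0) (y : E) :
    SSV.kappa D k (u * v) y =
      SSV.kappa D k v y *
        ∏ α ∈ (D.Pi0 u).image (fun β => v.linear.symm β),
          k α ^ (-(D.chi α) * SSV.eta ((D.chi α : ℝ) * ⟪α, y⟫_ℝ)) ∧
    ((∀ α ∈ D.Φ0, ⟪α, y⟫_ℝ ≠ 0) →
      SSV.kappa D k (u * v) y = SSV.kappa D k u (v y) * SSV.kappa D k v y) := by
  have hodd : ∀ α ∈ D.pos, SSV.kappaFactor D k y (-α) = (SSV.kappaFactor D k y α)⁻¹ :=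
    fun α hα => SSV.kappaFactor_neg D k y (D.k_neg hk (D.pos_subset hα)) hα
  have hfirst : SSV.kappa D k (u * v) y =
      SSV.kappa D k v y * ∏ α ∈ (D.Pi0 u).image v.linear.symm, SSV.kappaFactor D k y α := by
    rw [SSV.Data.prod_image_Pi0 hodd (D.W0_le_rootIsometries hu) (D.W0_le_rootIsometries hv),
      SSV.kappa_eq_prod_kappaFactor, SSV.kappa_eq_prod_kappaFactor, mul_div_cancel]
  refine ⟨hfirst, fun hy => ?_⟩
  rw [hfirst, SSV.prod_image_Pi0_kappaFactor D k y hk u hv hy, mul_comm]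

/-- with `κ_v(y) = ∏_{α ∈ Π0(v)} k(α)^{−η(α(y))}` and
`χ = χ₊ − χ₋ : Φ0 → {±1}`: (1) `κ_{uv}(y) = κ_v(y)·∏_{α ∈ v⁻¹Π0(u)}
k(α)^{−χ(α)·η(χ(α)·α(y))}`; (2) if `α(y) ≠ 0` for all `α ∈ Φ0` then
`κ_{uv}(y) = κ_u(v·y)·κ_v(y)`. -/
theorem statement19
    {E : Type*} [NormedAddCommGroup E] [InnerProductSpace ℝ E] [FiniteDimensional ℝ E]
    (D : SSV.Data E) {F : Type*} [Field F] (k : E → Fˣ)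
    (hk : ∀ α ∈ D.Φ0, ∀ w ∈ D.W0, k (w.linear α) = k α)
    (u v : E ≃ᵃ[ℝ] E) (hu : u ∈ D.W0) (hv : v ∈ D.W0) (y : E) :
    SSV.kappa D k (u * v) y =
      SSV.kappa D k v y *
        ∏ α ∈ (D.Pi0 u).image (fun β => v.linear.symm β),
          k α ^ (-(D.chi α) * SSV.eta ((D.chi α : ℝ) * ⟪α, y⟫_ℝ)) ∧
    ((∀ α ∈ D.Φ0, ⟪α, y⟫_ℝ ≠ 0) →
      SSV.kappa D k (u * v) y = SSV.kappa D k u (v y) * SSV.kappa D k v y) :=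
  statement19_general D k hk u v hu hv y
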